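/- Let X be a random vector in ℝ^d with E‖X‖² < ∞, mean m_x and covariance Σ_x, and let ω be an MCAR mask with probability vector p ∈ (0,1]^d, independent of X. Put Σ_x^NA := Cov(X ⊙ ω) and m_x^NA := E[X ⊙ ω]. Then the covariance of X can be recovered from the masked quantities by the debiasing identity Σ_x = P⁻¹ Σ_x^NA P⁻¹ + P⁻¹(I_d − P⁻¹) diag(Σ_x^NA) + P⁻¹(I_d − P⁻¹) diag(m_x^NA) diag(m_x^NA). -/

import Mathlib

/-!
Write `Y = X ⊙ ω`. Independence of `ω` and `X` gives `E[Yᵢ] = pᵢ E[Xᵢ]` and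
`E[YᵢYⱼ] = E[ωᵢωⱼ] E[XᵢXⱼ]`, where `E[ωᵢωⱼ] = pᵢpⱼ` for `i ≠ j` by independence of the
coordinates of the mask, and `E[ωᵢ²] = E[ωᵢ] = pᵢ` since `ωᵢ` is `0/1`-valued. Hence
`Cov(Y)ᵢⱼ = pᵢpⱼ Σᵢⱼ` off the diagonal, while on the diagonal only one factor `pᵢ` appears:
`Cov(Y)ᵢᵢ + E[Yᵢ]² = pᵢ (Σᵢᵢ + E[Xᵢ]²)`. Solving these relations for `Σ` is the identity.
-/

open MeasureTheory ProbabilityTheory Matrix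

/-- The mean vector of a random vector, defined coordinatewise. -/
noncomputable def meanVec {Ω : Type*} [MeasurableSpace Ω] (μ : Measure Ω) {d : ℕ}
    (X : Ω → Fin d → ℝ) : Fin d → ℝ :=
  fun i => ∫ a, X a i ∂μ

/-- The covariance matrix `E[(X - EX)(X - EX)ᵀ]` of a random vector, defined entrywise. -/
noncomputable def covMatrix {Ω : Type*} [MeasurableSpace Ω] (μ : Measure Ω) {d : ℕ}
    (X : Ω → Fin d → ℝ) : Matrix (Fin d) (Fin d) ℝ :=
  Matrix.of fun i j => ∫ a, (X a i - meanVec μ X i) * (X a j - meanVec μ X j) ∂μ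

section

variable {Ω : Type*} [MeasurableSpace Ω] {μ : Measure Ω} {ι : Type*}

lemma memLp_two_apply_of_integrable_sum_sq [Fintype ι] {X : Ω → ι → ℝ} (hX : Measurable X)
    (hX2 : Integrable (fun a => ∑ i, X a i ^ 2) μ) (i : ι) : MemLp (fun a => X a i) 2 μ := by
  have hXi : AEStronglyMeasurable (fun a => X a i) μ := hX.eval.aestronglyMeasurable
  refine (memLp_two_iff_integrable_sq hXi).2 (hX2.mono' (hXi.pow 2) ?_)
  filter_upwards with a
  rw [Real.norm_of_nonneg (sq_nonneg _)]
  exact Finset.single_le_sum (fun j _ => sq_nonneg (X a j)) (Finset.mem_univ i)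

lemma memLp_top_of_ae_zero_or_one {w : Ω → ℝ} (hw : AEStronglyMeasurable w μ)
    (h01 : ∀ᵐ a ∂μ, w a = 0 ∨ w a = 1) : MemLp w ⊤ μ :=
  memLp_top_of_bound hw 1 (h01.mono fun a ha => by rcases ha with h | h <;> simp [h])

lemma integral_eq_measureReal_of_ae_zero_or_one {w : Ω → ℝ} (hw : Measurable w)
    (h01 : ∀ᵐ a ∂μ, w a = 0 ∨ w a = 1) : ∫ a, w a ∂μ = μ.real {a | w a = 1} := by
  have hw_indicator : w =ᵐ[μ] {a | w a = 1}.indicator 1 :=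
    h01.mono fun a ha => by rcases ha with h | h <;> simp [h]
  rw [integral_congr_ae hw_indicator]
  exact integral_indicator_one (hw (measurableSet_singleton 1))

lemma integral_mul_eq_ite_of_iIndepFun [DecidableEq ι] {W : Ω → ι → ℝ} {p : ι → ℝ}
    (hW : Measurable W)
    (h01 : ∀ᵐ a ∂μ, ∀ i, W a i = 0 ∨ W a i = 1) (hmean : ∀ i, ∫ a, W a i ∂μ = p i)
    (hindep : iIndepFun (fun i a => W a i) μ) (i j : ι) :
    ∫ a, W a i * W a j ∂μ = if i = j then p i else p i * p j := by
  split_ifs with hij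
  · subst hij
    have hsq : (fun a => W a i * W a i) =ᵐ[μ] fun a => W a i :=
      h01.mono fun a ha => by rcases ha i with h | h <;> simp [h]
    rw [integral_congr_ae hsq, hmean]
  · rw [(hindep.indepFun hij).integral_fun_mul_eq_mul_integral hW.eval.aestronglyMeasurable
      hW.eval.aestronglyMeasurable, hmean, hmean]

lemma integral_mul_mask {X W : Ω → ι → ℝ} (hX : Measurable X) (hW : Measurable W)
    (hWX : IndepFun W X μ) (i : ι) :
    ∫ a, X a i * W a i ∂μ = (∫ a, W a i ∂μ) * ∫ a, X a i ∂μ := by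
  simp_rw [mul_comm (X _ i)]
  exact (hWX.comp (measurable_pi_apply i) (measurable_pi_apply i)).integral_fun_mul_eq_mul_integral
    hW.eval.aestronglyMeasurable hX.eval.aestronglyMeasurable

lemma integral_mul_mask_mul_mul_mask {X W : Ω → ι → ℝ} (hX : Measurable X) (hW : Measurable W)
    (hWX : IndepFun W X μ) (i j : ι) :
    ∫ a, X a i * W a i * (X a j * W a j) ∂μ
      = (∫ a, W a i * W a j ∂μ) * ∫ a, X a i * X a j ∂μ := by
  have hprod : Measurable fun x : ι → ℝ => x i * x j := by fun_prop
  have h := (hWX.comp hprod hprod).integral_fun_mul_eq_mul_integral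
    (hprod.comp hW).aestronglyMeasurable (hprod.comp hX).aestronglyMeasurable
  simp only [Function.comp_apply] at h
  rw [← h]
  congr 1 with a
  ring

lemma covMatrix_apply_eq_sub [IsProbabilityMeasure μ] {d : ℕ} {X : Ω → Fin d → ℝ}
    (hX : ∀ i, MemLp (fun a => X a i) 2 μ) (i j : Fin d) :
    covMatrix μ X i j = ∫ a, X a i * X a j ∂μ - meanVec μ X i * meanVec μ X j :=
  covariance_eq_sub (hX i) (hX j)

lemma eq_debiased_cov_of_masked_moments [Fintype ι] [DecidableEq ι] {S T : Matrix ι ι ℝ}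
    {p m : ι → ℝ} (hp : ∀ i, p i ≠ 0)
    (hT : ∀ i j, T i j
      = (if i = j then p i else p i * p j) * (S i j + m i * m j) - p i * m i * (p j * m j)) :
    S = diagonal (fun i => (p i)⁻¹) * T * diagonal (fun i => (p i)⁻¹)
      + diagonal (fun i => (p i)⁻¹) * (1 - diagonal (fun i => (p i)⁻¹)) * diagonal (fun i => T i i)
      + diagonal (fun i => (p i)⁻¹) * (1 - diagonal (fun i => (p i)⁻¹))
          * (diagonal (fun i => p i * m i) * diagonal (fun i => p i * m i)) := by
  ext i j
  simp only [Matrix.add_apply, diagonal_mul_diagonal, mul_diagonal, diagonal_mul, Matrix.sub_apply,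
    one_apply, diagonal_apply, hT]
  have hpi := hp i
  have hpj := hp j
  split_ifs with hij
  · subst hij
    field_simp
    ring
  · field_simp
    ring

end

/-- **Debiasing identity for the covariance under MCAR zero imputation.**
If `X` is a random vector in `ℝ^d` with `E‖X‖² < ∞`, mean `m_x` and covariance `Σ_x`, and `W`
is an MCAR mask with probability vector `p ∈ (0,1]^d`, independent of `X`, then writing
`Σ_x^NA := Cov(X⊙W)` and `m_x^NA := E[X⊙W]`, the covariance of `X` is recovered via
`Σ_x = P⁻¹ Σ_x^NA P⁻¹ + P⁻¹(I - P⁻¹) diag(Σ_x^NA) + P⁻¹(I - P⁻¹) diag(m_x^NA) diag(m_x^NA)`. -/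
theorem cov_debias_hadamard_mcar_mask
    {Ω : Type*} [MeasurableSpace Ω] (μ : Measure Ω) [IsProbabilityMeasure μ]
    {d : ℕ} (X W : Ω → Fin d → ℝ) (p : Fin d → ℝ)
    (hp : ∀ i, p i ∈ Set.Ioc (0 : ℝ) 1)
    (hXmeas : Measurable X) (hWmeas : Measurable W)
    (hX2 : Integrable (fun a => ∑ i, (X a i) ^ 2) μ)
    (hW01 : ∀ᵐ a ∂μ, ∀ i, W a i = 0 ∨ W a i = 1)
    (hWber : ∀ i, μ {a | W a i = 1} = ENNReal.ofReal (p i))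
    (hWiIndep : iIndepFun (fun i a => W a i) μ)
    (hIndep : IndepFun W X μ) :
    covMatrix μ X =
      Matrix.diagonal (fun i => (p i)⁻¹) * covMatrix μ (fun a i => X a i * W a i)
          * Matrix.diagonal (fun i => (p i)⁻¹)
        + Matrix.diagonal (fun i => (p i)⁻¹) * (1 - Matrix.diagonal (fun i => (p i)⁻¹))
            * Matrix.diagonal (fun i => covMatrix μ (fun a i => X a i * W a i) i i)
        + Matrix.diagonal (fun i => (p i)⁻¹) * (1 - Matrix.diagonal (fun i => (p i)⁻¹))
            * (Matrix.diagonal (meanVec μ (fun a i => X a i * W a i))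
                * Matrix.diagonal (meanVec μ (fun a i => X a i * W a i))) := by
  have hWi01 (i : Fin d) : ∀ᵐ a ∂μ, W a i = 0 ∨ W a i = 1 := hW01.mono fun a ha => ha i
  have hEW (i : Fin d) : ∫ a, W a i ∂μ = p i := by
    rw [integral_eq_measureReal_of_ae_zero_or_one hWmeas.eval (hWi01 i), measureReal_def,
      hWber i, ENNReal.toReal_ofReal (hp i).1.le]
  have hXL2 := memLp_two_apply_of_integrable_sum_sq hXmeas hX2
  have hYL2 (i : Fin d) : MemLp (fun a => X a i * W a i) 2 μ :=
    (memLp_top_of_ae_zero_or_one hWmeas.eval.aestronglyMeasurable (hWi01 i)).mul (hXL2 i)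
  have hmean : meanVec μ (fun a i => X a i * W a i) = fun i => p i * meanVec μ X i := by
    ext i
    rw [meanVec, integral_mul_mask hXmeas hWmeas hIndep, hEW, meanVec]
  rw [hmean]
  refine eq_debiased_cov_of_masked_moments (fun i => (hp i).1.ne') fun i j => ?_
  rw [covMatrix_apply_eq_sub hYL2, hmean, integral_mul_mask_mul_mul_mask hXmeas hWmeas hIndep,
    integral_mul_eq_ite_of_iIndepFun hWmeas hW01 hEW hWiIndep, covMatrix_apply_eq_sub hXL2]
  ring
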